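/- arXiv:1305.5276 — 3 statements merged into one kernel-verified Lean document; each statement's English description precedes it below -/
import Mathlib

section
/- Let A be an N×N real matrix such that every diagonal entry of A equals 2, all off-diagonal entries are ≤ 0, the entries immediately adjacent to the diagonal (cyclically, i.e. indices i,j with i−j ≡ ±1 mod N) are strictly negative, and every row of A sums to 0. Then the kernel of A is exactly the one-dimensional space spanned by the vector (1, 1, …, 1). -/
/-- Let `A` be an `N×N` real matrix (`N ≥ 2`) with all diagonal entries equal to `2`,
all off-diagonal entries `≤ 0`, strictly negative entries at the cyclically adjacent
positions (`i − j ≡ ±1 mod N`), and all row sums zero. Then the kernel of `A` is exactly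
the one-dimensional space of constant vectors, spanned by `(1, 1, …, 1)`. -/
theorem stmt15 (N : ℕ) (hN : 2 ≤ N) (A : Matrix (Fin N) (Fin N) ℝ)
    (hdiag : ∀ i, A i i = 2)
    (hoff : ∀ i j, i ≠ j → A i j ≤ 0)
    (hadj : ∀ i j : Fin N, (i.val + 1) % N = j.val → A i j < 0 ∧ A j i < 0)
    (hrow : ∀ i, ∑ j, A i j = 0) :
    ∀ v : Fin N → ℝ, A.mulVec v = 0 ↔ ∃ c : ℝ, v = fun _ => c := by
  have hNpos : 0 < N := by omega
  intro v
  constructor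
  · intro hv
    have : Nonempty (Fin N) := ⟨⟨0, hNpos⟩⟩
    obtain ⟨i₀, hi₀⟩ := Finite.exists_max v
    set M := v i₀ with hM
    have step : ∀ i : Fin N, v i = M →
        v ⟨(i.val + 1) % N, Nat.mod_lt _ hNpos⟩ = M := by
      intro i hiM
      set j : Fin N := ⟨(i.val + 1) % N, Nat.mod_lt _ hNpos⟩ with hj
      have h1 : ∑ k, A i k * v k = 0 := by
        have := congrFun hv i
        simpa [Matrix.mulVec, dotProduct] using this
      have h2 : ∑ k, A i k * M = 0 := by
        rw [← Finset.sum_mul, hrow, zero_mul]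
      have hsum : ∑ k, A i k * (v k - M) = 0 := by
        have : ∑ k, A i k * (v k - M) = (∑ k, A i k * v k) - ∑ k, A i k * M := by
          rw [← Finset.sum_sub_distrib]
          exact Finset.sum_congr rfl fun k _ => by ring
        rw [this, h1, h2, sub_zero]
      have hnonneg : ∀ k ∈ Finset.univ, (0:ℝ) ≤ A i k * (v k - M) := by
        intro k _
        by_cases hk : k = i
        · subst hk; simp [hiM]
        · nlinarith [hoff i k (Ne.symm hk), hi₀ k]
      have hz := (Finset.sum_eq_zero_iff_of_nonneg hnonneg).mp hsum j
        (Finset.mem_univ j)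
      have hAij : A i j < 0 := (hadj i j rfl).1
      rcases mul_eq_zero.mp hz with h | h
      · exact absurd h (ne_of_lt hAij)
      · linarith
    have hall : ∀ k : ℕ, v ⟨(i₀.val + k) % N, Nat.mod_lt _ hNpos⟩ = M := by
      intro k
      induction k with
      | zero => simp [Nat.mod_eq_of_lt i₀.isLt, hM]
      | succ n ih =>
        have h := step _ ih
        have hidx2 : ((i₀.val + n) % N + 1) % N = (i₀.val + (n + 1)) % N := by
          rw [Nat.mod_add_mod, Nat.add_assoc]
        simpa [hidx2] using h
    refine ⟨M, funext fun j => ?_⟩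
    have hk := hall (N - i₀.val + j.val)
    have hidx : (i₀.val + (N - i₀.val + j.val)) % N = j.val := by
      have h1 : i₀.val ≤ N := le_of_lt i₀.isLt
      have : i₀.val + (N - i₀.val + j.val) = N + j.val := by omega
      rw [this, Nat.add_mod_left, Nat.mod_eq_of_lt j.isLt]
    simpa [hidx] using hk
  · rintro ⟨c, rfl⟩
    funext i
    simp [Matrix.mulVec, dotProduct, ← Finset.sum_mul, hrow]
end

section
/- Let A be an N×N real matrix with diagonal entries 2, off-diagonal entries ≤ 0, cyclically adjacent off-diagonal entries strictly negative, and all row sums zero. Then the only vector with all nonnegative entries in the range of A is the zero vector; consequently, the one-dimensional kernel of the transpose Aᵀ is spanned by a vector all of whose entries are strictly positive (or all strictly negative). -/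
/-!
A vector `w` with `A w ≥ 0` attains its minimum at some `i`; since the row of `A` at `i` sums
to zero, `(A w) i = ∑ⱼ A i j (w j - w i)` is a sum of nonpositive terms, so `w` is also minimal at
every `j` with `A i j < 0`. Following the cycle `i ↦ i + 1`, `w` is constant, hence `A w = 0`:
the range of `A` contains no nonzero nonnegative vector, and the kernel of `A` is spanned by `1`.
The range of `A` is then the hyperplane orthogonal to any nonzero `v` with `vᵀ A = 0`. If `v` had
entries `v i ≤ 0 ≤ v j`, the nonnegative vector `v j eᵢ - v i eⱼ` (or `eᵢ` if `v i = 0`) would be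
orthogonal to `v`, so `v` has strictly constant sign; a second, independent left null vector
would give a combination with a zero entry.
-/

open Module LinearMap Matrix

open Fin.NatCast in
theorem Fin.forall_of_forall_imp_add_one {N : ℕ} [NeZero N] {P : Fin N → Prop}
    (hstep : ∀ i, P i → P (i + 1)) {i₀ : Fin N} (h₀ : P i₀) (j : Fin N) : P j := by
  have key : ∀ k : ℕ, P (i₀ + (k : Fin N)) := by
    intro k
    induction k with
    | zero => simpa using h₀
    | succ k ih => simpa [add_assoc] using hstep _ ih
  simpa using key (j - i₀).val

namespace Matrix

section RowSumZero

variable {n : Type*} [Fintype n] {A : Matrix n n ℝ}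

theorem mulVec_apply_eq_sum_mul_sub (hrow : ∀ i, ∑ j, A i j = 0) (w : n → ℝ) (i : n) (c : ℝ) :
    (A *ᵥ w) i = ∑ j, A i j * (w j - c) := by
  simp [mul_sub, Finset.sum_sub_distrib, ← Finset.sum_mul, hrow, mulVec, dotProduct]

theorem mulVec_eq_zero_of_forall_eq (hrow : ∀ i, ∑ j, A i j = 0) {w : n → ℝ}
    (hw : ∀ i j, w i = w j) : A *ᵥ w = 0 :=
  funext fun i => by simp [mulVec_apply_eq_sum_mul_sub hrow w i (w i), hw _ i]

theorem eq_of_forall_le_of_mulVec_nonneg (hoff : ∀ i j, i ≠ j → A i j ≤ 0)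
    (hrow : ∀ i, ∑ j, A i j = 0) {w : n → ℝ} {i : n} (hmin : ∀ j, w i ≤ w j)
    (hw : 0 ≤ (A *ᵥ w) i) {j : n} (hij : A i j < 0) : w j = w i := by
  have hterm : ∀ k, A i k * (w k - w i) ≤ 0 := fun k => by
    rcases eq_or_ne i k with rfl | hik
    · simp
    · exact mul_nonpos_of_nonpos_of_nonneg (hoff i k hik) (sub_nonneg.2 (hmin k))
  have hsum : ∑ k, A i k * (w k - w i) = 0 :=
    le_antisymm (Finset.sum_nonpos fun k _ => hterm k)
      (mulVec_apply_eq_sum_mul_sub hrow w i (w i) ▸ hw)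
  have hj := (Finset.sum_eq_zero_iff_of_nonpos fun k _ => hterm k).1 hsum j (Finset.mem_univ j)
  linarith [(mul_eq_zero.1 hj).resolve_left hij.ne]

end RowSumZero

theorem forall_eq_of_mulVec_nonneg_of_cyclic {N : ℕ} [NeZero N] {A : Matrix (Fin N) (Fin N) ℝ}
    (hoff : ∀ i j, i ≠ j → A i j ≤ 0) (hrow : ∀ i, ∑ j, A i j = 0)
    (hcyc : ∀ i, A i (i + 1) < 0) {w : Fin N → ℝ} (hw : 0 ≤ A *ᵥ w) (i j : Fin N) :
    w i = w j := by
  obtain ⟨i₀, hi₀⟩ := Finite.exists_min w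
  have hmin : ∀ k, w k = w i₀ :=
    Fin.forall_of_forall_imp_add_one (P := fun k => w k = w i₀)
      (fun k hk => (eq_of_forall_le_of_mulVec_nonneg hoff hrow (fun j => hk ▸ hi₀ j) (hw k)
        (hcyc k)).trans hk) rfl
  rw [hmin i, hmin j]

theorem range_mulVecLin_eq_ker_dotProductBilin {K n : Type*} [Field K] [Fintype n]
    {A : Matrix n n K} (hA : finrank K (ker A.mulVecLin) ≤ 1) {v : n → K} (hv : v ᵥ* A = 0)
    (hv0 : v ≠ 0) : range A.mulVecLin = ker (dotProductBilin K K v) := by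
  classical
  apply Submodule.eq_of_le_of_finrank_le
  · rintro _ ⟨w, rfl⟩
    simp [dotProduct_mulVec, hv]
  · have hproper : ker (dotProductBilin K K v) ≠ ⊤ := by
      rw [Ne, ker_eq_top]
      refine fun h => hv0 (funext fun i => ?_)
      simpa using LinearMap.congr_fun h (Pi.single i 1)
    have hlt := Submodule.finrank_lt hproper
    have hsum := finrank_range_add_finrank_ker A.mulVecLin
    simp only [finrank_fintype_fun_eq_card] at hlt hsum
    omega

theorem forall_pos_or_forall_neg_of_dotProduct_nonneg_eq_zero {n : Type*} [Fintype n]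
    {v : n → ℝ} (hv : ∀ h : n → ℝ, 0 ≤ h → v ⬝ᵥ h = 0 → h = 0) :
    (∀ i, 0 < v i) ∨ ∀ i, v i < 0 := by
  classical
  have hne : ∀ i, v i ≠ 0 := fun i hi => by
    simpa using congr_fun (hv (Pi.single i 1) (Pi.single_nonneg.2 zero_le_one) (by simp [hi])) i
  by_contra! ⟨⟨i, hi⟩, ⟨j, hj⟩⟩
  replace hi := hi.lt_of_ne (hne i)
  replace hj := hj.lt_of_ne' (hne j)
  have hij : i ≠ j := by rintro rfl; linarith
  have hpos : 0 ≤ (Pi.single i (v j) + Pi.single j (-v i) : n → ℝ) :=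
    add_nonneg (Pi.single_nonneg.2 hj.le) (Pi.single_nonneg.2 (by linarith))
  have := congr_fun (hv _ hpos (by simp [dotProduct_add]; ring)) i
  simp [hij] at this
  linarith

theorem exists_pos_vecMul_eq_zero {n : Type*} [Fintype n] {A : Matrix n n ℝ}
    (hker : finrank ℝ (ker A.mulVecLin) = 1)
    (hrange : ∀ h, 0 ≤ h → h ∈ range A.mulVecLin → h = 0) :
    ∃ u : n → ℝ, (∀ i, 0 < u i) ∧ u ᵥ* A = 0 ∧ ∀ w, w ᵥ* A = 0 → ∃ c : ℝ, w = c • u := by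
  classical
  have hsign : ∀ v, v ᵥ* A = 0 → v ≠ 0 → (∀ i, 0 < v i) ∨ ∀ i, v i < 0 := fun v hv hv0 =>
    forall_pos_or_forall_neg_of_dotProduct_nonneg_eq_zero fun h hh hvh => hrange h hh <| by
      rwa [range_mulVecLin_eq_ker_dotProductBilin hker.le hv hv0]
  have hdet : A.det = 0 := by
    obtain ⟨w, hw, hw0⟩ := Submodule.exists_mem_ne_zero_of_ne_bot
      (Submodule.one_le_finrank_iff.1 hker.ge)
    exact exists_mulVec_eq_zero_iff.1 ⟨w, hw0, hw⟩
  obtain ⟨v, hv0, hv⟩ := exists_vecMul_eq_zero_iff.2 hdet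
  obtain ⟨i₀, -⟩ := Function.ne_iff.1 hv0
  obtain ⟨u, hu, huA⟩ : ∃ u : n → ℝ, (∀ i, 0 < u i) ∧ u ᵥ* A = 0 := by
    rcases hsign v hv hv0 with hpos | hneg
    · exact ⟨v, hpos, hv⟩
    · exact ⟨-v, fun i => neg_pos.2 (hneg i), by rw [neg_vecMul, hv, neg_zero]⟩
  refine ⟨u, hu, huA, fun w hw => ⟨w i₀ / u i₀, ?_⟩⟩
  by_contra hne
  have hzero : (w - (w i₀ / u i₀) • u) i₀ = 0 := by
    simp [div_mul_cancel₀ _ (hu i₀).ne']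
  rcases hsign _ (by simp [sub_vecMul, smul_vecMul, hw, huA]) (sub_ne_zero.2 hne) with h | h
  · exact (h i₀).ne' hzero
  · exact (h i₀).ne hzero

end Matrix

theorem stmt16_general (N : ℕ) (hN : 2 ≤ N) (A : Matrix (Fin N) (Fin N) ℝ)
    (hoff : ∀ i j, i ≠ j → A i j ≤ 0)
    (hadj : ∀ i j : Fin N, (i.val + 1) % N = j.val → A i j < 0 ∧ A j i < 0)
    (hrow : ∀ i, ∑ j, A i j = 0) :
    (∀ h : Fin N → ℝ, (∀ i, 0 ≤ h i) → (∃ w, A.mulVec w = h) → h = 0) ∧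
    (∃ u : Fin N → ℝ, (∀ i, 0 < u i) ∧ A.transpose.mulVec u = 0 ∧
      ∀ w : Fin N → ℝ, A.transpose.mulVec w = 0 → ∃ c : ℝ, w = c • u) := by
  have : NeZero N := ⟨by omega⟩
  have hconst : ∀ w, 0 ≤ A *ᵥ w → ∀ i j, w i = w j := fun w =>
    forall_eq_of_mulVec_nonneg_of_cyclic hoff hrow
      (fun i => (hadj i (i + 1) (by simp [Fin.val_add])).1)
  have hrange : ∀ h, 0 ≤ h → h ∈ range A.mulVecLin → h = 0 := by
    rintro _ hh ⟨w, rfl⟩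
    exact mulVec_eq_zero_of_forall_eq hrow (hconst w hh)
  have hker : ker A.mulVecLin = Submodule.span ℝ {1} := by
    refine le_antisymm (fun w hw => Submodule.mem_span_singleton.2 ⟨w 0, ?_⟩) ?_
    · have hw' := hconst w (le_of_eq (mem_ker.1 hw).symm)
      exact funext fun i => by simp [hw' 0 i]
    · exact (Submodule.span_singleton_le_iff_mem _ _).2 <|
        mem_ker.2 (mulVec_eq_zero_of_forall_eq hrow fun _ _ => rfl)
  obtain ⟨u, hu, huA, huniq⟩ :=
    exists_pos_vecMul_eq_zero (by rw [hker, finrank_span_singleton one_ne_zero]) hrange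
  simp only [mulVec_transpose]
  exact ⟨fun h hh => hrange h hh, u, hu, huA, huniq⟩

/-- Let `A` be an `N×N` real matrix (`N ≥ 2`) with diagonal entries `2`, off-diagonal
entries `≤ 0`, strictly negative entries at the cyclically adjacent positions
(`i − j ≡ ±1 mod N`), and all row sums zero. Then the only vector with all nonnegative
entries in the range of `A` is the zero vector, and the one-dimensional kernel of `Aᵀ`
is spanned by a vector all of whose entries are strictly positive. -/
theorem stmt16 (N : ℕ) (hN : 2 ≤ N) (A : Matrix (Fin N) (Fin N) ℝ)
    (hdiag : ∀ i, A i i = 2)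
    (hoff : ∀ i j, i ≠ j → A i j ≤ 0)
    (hadj : ∀ i j : Fin N, (i.val + 1) % N = j.val → A i j < 0 ∧ A j i < 0)
    (hrow : ∀ i, ∑ j, A i j = 0) :
    (∀ h : Fin N → ℝ, (∀ i, 0 ≤ h i) → (∃ w, A.mulVec w = h) → h = 0) ∧
    (∃ u : Fin N → ℝ, (∀ i, 0 < u i) ∧ A.transpose.mulVec u = 0 ∧
      ∀ w : Fin N → ℝ, A.transpose.mulVec w = 0 → ∃ c : ℝ, w = c • u) :=
  stmt16_general N hN A hoff hadj hrow
end

section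
/- Suppose (λ_j) and (μ_j) are N-tuples of real numbers, each different from 0 and 1, both satisfying a common system of edge equations of the form ∏_i z_i^{e_i} = 1 (products of the shape parameter functions z, 1/(1−z), (z−1)/z), with λ_j and μ_j in the same component of R\{0,1} for all j, and λ_j > μ_j for all j. Then the tuple z_j := ((1+τ)/2)λ_j + ((1−τ)/2)μ_j consists of pseudo-complex numbers each satisfying |z_j|² > 0, |1−z_j|² > 0, and with positive imaginary part, and (z_j) satisfies the same system of equations over B = R + Rτ. -/
/-- The pseudo-complex numbers `B = ℝ + ℝτ`, `τ² = 1`: `⟨a, b⟩` represents `a + bτ`. -/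
@[ext]
structure PC where
  re : ℝ
  im : ℝ

namespace PC

/-- The idempotent splitting `B ≃ ℝ × ℝ`, `a + bτ ↦ (a + b, a − b)`. -/
noncomputable def toProd : PC ≃ ℝ × ℝ where
  toFun z := (z.re + z.im, z.re - z.im)
  invFun p := ⟨(p.1 + p.2) / 2, (p.1 - p.2) / 2⟩
  left_inv z := by cases z; ext <;> dsimp <;> ring
  right_inv p := by cases p; simp only [Prod.mk.injEq]; constructor <;> ring

/-- The commutative ring structure on `B = ℝ + ℝτ`, transported from the componentwise
ring `ℝ × ℝ` along the idempotent splitting; its multiplication is the pseudo-complex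
multiplication `(a + bτ)(c + dτ) = (ac + bd) + (ad + bc)τ` (this is asserted and
certified in the theorem below). -/
noncomputable instance : CommRing PC := Equiv.commRing toProd

/-- The real number `r`, as the pseudo-complex number `r + 0τ`. -/
def ofReal (r : ℝ) : PC := ⟨r, 0⟩

/-- `(1 + τ)/2`. -/
noncomputable def halfPlus : PC := ⟨1 / 2, 1 / 2⟩

/-- `(1 − τ)/2`. -/
noncomputable def halfMinus : PC := ⟨1 / 2, -(1 / 2)⟩

/-- The square-norm `|a + bτ|² = a² − b²`. -/
def sqnorm (z : PC) : ℝ := z.re ^ 2 - z.im ^ 2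

end PC

/-- A system of edge (gluing) equations indexed by `ι`: for each `i : ι`, the product
over `j` of `z_j^{a i j} · (1/(1 − z_j))^{b i j} · ((z_j − 1)/z_j)^{c i j}` equals `1`.
It makes sense over any commutative ring, interpreting `1/x` as `Ring.inverse x`. -/
def SatSys {R : Type*} [CommRing R] {N : ℕ} {ι : Type*}
    (a b c : ι → Fin N → ℕ) (z : Fin N → R) : Prop :=
  ∀ i : ι, ∏ j : Fin N,
      (z j ^ a i j * Ring.inverse (1 - z j) ^ b i j *
        ((z j - 1) * Ring.inverse (z j)) ^ c i j) = 1


noncomputable def PC.E : PC ≃+* ℝ × ℝ := PC.toProd.ringEquiv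

lemma PC.E_apply (z : PC) : PC.E z = PC.toProd z := rfl

lemma map_ringInverse {R S : Type*} [Ring R] [Ring S] (f : R ≃+* S) (x : R) :
    f (Ring.inverse x) = Ring.inverse (f x) := by
  by_cases h : IsUnit x
  · obtain ⟨u, rfl⟩ := h
    have hv : f (u : R) = ((Units.map (f : R →* S)) u : S) := rfl
    rw [Ring.inverse_unit, hv, Ring.inverse_unit]
    exact (Units.coe_map_inv (f : R →* S) u).symm
  · have h' : ¬ IsUnit (f x) := fun hfx => h (by
      have := hfx.map f.symm
      simpa using this)
    rw [Ring.inverse_non_unit _ h, Ring.inverse_non_unit _ h', map_zero]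

lemma prod_ringInverse (p q : ℝ) (hp : p ≠ 0) (hq : q ≠ 0) :
    Ring.inverse ((p, q) : ℝ × ℝ) = (p⁻¹, q⁻¹) := by
  have e1 : ((p, q) : ℝ × ℝ) * (p⁻¹, q⁻¹) = 1 := by
    rw [Prod.mk_mul_mk, mul_inv_cancel₀ hp, mul_inv_cancel₀ hq]; rfl
  have e2 : ((p⁻¹, q⁻¹) : ℝ × ℝ) * (p, q) = 1 := by
    rw [Prod.mk_mul_mk, inv_mul_cancel₀ hp, inv_mul_cancel₀ hq]; rfl
  have hu : ((p, q) : ℝ × ℝ) = ↑(⟨(p, q), (p⁻¹, q⁻¹), e1, e2⟩ : (ℝ × ℝ)ˣ) := rfl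
  rw [hu, Ring.inverse_unit]
  rfl

/-- If `(λ_j)` and `(μ_j)` are real solutions of a common system of edge equations, with
`λ_j` and `μ_j` in the same component of `ℝ \ {0, 1}` and `λ_j > μ_j` for all `j`, then
`z_j := ((1+τ)/2)λ_j + ((1−τ)/2)μ_j` defines pseudo-complex numbers with `|z_j|² > 0`,
`|1 − z_j|² > 0` and positive imaginary part, satisfying the same system over
`B = ℝ + ℝτ`. (The first three clauses certify that the transported ring structure on
`PC` is indeed the pseudo-complex one.) -/
theorem stmt19 {N : ℕ} {ι : Type*} (a b c : ι → Fin N → ℕ)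
    (lam mu : Fin N → ℝ)
    (hlam : SatSys a b c lam) (hmu : SatSys a b c mu)
    (hsame : ∀ j, (lam j < 0 ∧ mu j < 0) ∨
      (0 < lam j ∧ lam j < 1 ∧ 0 < mu j ∧ mu j < 1) ∨
      (1 < lam j ∧ 1 < mu j))
    (hgt : ∀ j, mu j < lam j) :
    ((1 : PC) = ⟨1, 0⟩) ∧
    (∀ z w : PC, z + w = ⟨z.re + w.re, z.im + w.im⟩) ∧
    (∀ z w : PC, z * w = ⟨z.re * w.re + z.im * w.im, z.re * w.im + z.im * w.re⟩) ∧
    (∀ j : Fin N,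
      0 < PC.sqnorm (PC.halfPlus * PC.ofReal (lam j) + PC.halfMinus * PC.ofReal (mu j)) ∧
      0 < PC.sqnorm
          (1 - (PC.halfPlus * PC.ofReal (lam j) + PC.halfMinus * PC.ofReal (mu j))) ∧
      0 < (PC.halfPlus * PC.ofReal (lam j) + PC.halfMinus * PC.ofReal (mu j)).im) ∧
    SatSys a b c
      (fun j => PC.halfPlus * PC.ofReal (lam j) + PC.halfMinus * PC.ofReal (mu j)) := by
  have h1 : (1 : PC) = ⟨1, 0⟩ := by
    apply PC.toProd.injective
    have : PC.E (1 : PC) = 1 := map_one _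
    rw [PC.E_apply] at this
    rw [this]
    simp [PC.toProd, Prod.ext_iff]
  have hadd : ∀ z w : PC, z + w = ⟨z.re + w.re, z.im + w.im⟩ := by
    intro z w
    apply PC.toProd.injective
    have : PC.E (z + w) = PC.E z + PC.E w := map_add _ _ _
    simp only [PC.E_apply] at this
    rw [this]
    simp only [PC.toProd, Equiv.coe_fn_mk, Prod.mk_add_mk, Prod.ext_iff]
    constructor <;> ring
  have hmul : ∀ z w : PC, z * w =
      ⟨z.re * w.re + z.im * w.im, z.re * w.im + z.im * w.re⟩ := by
    intro z w
    apply PC.toProd.injective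
    have : PC.E (z * w) = PC.E z * PC.E w := map_mul _ _ _
    simp only [PC.E_apply] at this
    rw [this]
    simp only [PC.toProd, Equiv.coe_fn_mk, Prod.mk_mul_mk, Prod.ext_iff]
    constructor <;> ring
  have hsub : ∀ z w : PC, z - w = ⟨z.re - w.re, z.im - w.im⟩ := by
    intro z w
    apply PC.toProd.injective
    have : PC.E (z - w) = PC.E z - PC.E w := map_sub _ _ _
    simp only [PC.E_apply] at this
    rw [this]
    simp only [PC.toProd, Equiv.coe_fn_mk, Prod.mk_sub_mk, Prod.ext_iff]
    constructor <;> ring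
  set Z : Fin N → PC :=
    fun j => PC.halfPlus * PC.ofReal (lam j) + PC.halfMinus * PC.ofReal (mu j) with hZ
  have hZj : ∀ j, Z j = ⟨(lam j + mu j) / 2, (lam j - mu j) / 2⟩ := by
    intro j
    rw [hZ]
    simp only [hmul, hadd, PC.halfPlus, PC.halfMinus, PC.ofReal]
    ext <;> dsimp <;> ring
  have hEZ : ∀ j, PC.E (Z j) = (lam j, mu j) := by
    intro j
    rw [PC.E_apply, hZj j]
    simp only [PC.toProd, Equiv.coe_fn_mk, Prod.ext_iff]
    constructor <;> ring
  have hlam0 : ∀ j, lam j ≠ 0 := by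
    intro j; rcases hsame j with h | h | h <;> [exact ne_of_lt h.1; exact ne_of_gt h.1;
      exact ne_of_gt (lt_trans one_pos h.1)]
  have hmu0 : ∀ j, mu j ≠ 0 := by
    intro j; rcases hsame j with h | h | h <;> [exact ne_of_lt h.2; exact ne_of_gt h.2.2.1;
      exact ne_of_gt (lt_trans one_pos h.2)]
  have hlam1 : ∀ j, (1 : ℝ) - lam j ≠ 0 := by
    intro j; rcases hsame j with h | h | h
    · exact ne_of_gt (by linarith [h.1])
    · exact ne_of_gt (by linarith [h.2.1])
    · exact ne_of_lt (by linarith [h.1])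
  have hmu1 : ∀ j, (1 : ℝ) - mu j ≠ 0 := by
    intro j; rcases hsame j with h | h | h
    · exact ne_of_gt (by linarith [h.2])
    · exact ne_of_gt (by linarith [h.2.2.2])
    · exact ne_of_lt (by linarith [h.2])
  refine ⟨h1, hadd, hmul, ?_, ?_⟩
  · intro j
    show 0 < (Z j).sqnorm ∧ 0 < (1 - Z j).sqnorm ∧ 0 < (Z j).im
    rw [hZj j, h1, hsub]
    dsimp [PC.sqnorm]
    have hg := hgt j
    refine ⟨?_, ?_, by linarith⟩
    · have : ((lam j + mu j) / 2) ^ 2 - ((lam j - mu j) / 2) ^ 2 = lam j * mu j := by ring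
      rw [this]
      rcases hsame j with h | h | h
      · exact mul_pos_of_neg_of_neg h.1 h.2
      · exact mul_pos h.1 h.2.2.1
      · exact mul_pos (lt_trans one_pos h.1) (lt_trans one_pos h.2)
    · have : (1 - (lam j + mu j) / 2) ^ 2 - (0 - (lam j - mu j) / 2) ^ 2 =
          (1 - lam j) * (1 - mu j) := by ring
      rw [this]
      rcases hsame j with h | h | h
      · have h1' : (0:ℝ) < 1 - lam j := by linarith [h.1]
        have h2' : (0:ℝ) < 1 - mu j := by linarith [h.2]
        exact mul_pos h1' h2'
      · have h1' : (0:ℝ) < 1 - lam j := by linarith [h.2.1]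
        have h2' : (0:ℝ) < 1 - mu j := by linarith [h.2.2.2]
        exact mul_pos h1' h2'
      · exact mul_pos_of_neg_of_neg (by linarith [h.1]) (by linarith [h.2])
  · show SatSys a b c Z
    intro i
    apply PC.E.injective
    rw [map_prod, map_one]
    have hterm : ∀ j, PC.E (Z j ^ a i j * Ring.inverse (1 - Z j) ^ b i j *
        ((Z j - 1) * Ring.inverse (Z j)) ^ c i j) =
        ((lam j ^ a i j * (1 - lam j)⁻¹ ^ b i j * ((lam j - 1) * (lam j)⁻¹) ^ c i j,
          mu j ^ a i j * (1 - mu j)⁻¹ ^ b i j * ((mu j - 1) * (mu j)⁻¹) ^ c i j) : ℝ × ℝ) := by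
      intro j
      rw [map_mul, map_mul, map_pow, map_pow, map_pow, map_mul, map_sub, map_one,
        map_ringInverse, map_ringInverse, map_sub, map_one, hEZ j]
      have e1 : (1 : ℝ × ℝ) - (lam j, mu j) = (1 - lam j, 1 - mu j) := rfl
      have e2 : ((lam j, mu j) : ℝ × ℝ) - 1 = (lam j - 1, mu j - 1) := rfl
      rw [e1, e2, prod_ringInverse _ _ (hlam1 j) (hmu1 j),
        prod_ringInverse _ _ (hlam0 j) (hmu0 j)]
      rfl
    rw [Finset.prod_congr rfl (fun j _ => hterm j)]
    have hl := hlam i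
    have hm := hmu i
    rw [Ring.inverse_eq_inv'] at hl hm
    apply Prod.ext
    · rw [Prod.fst_prod]
      exact hl
    · rw [Prod.snd_prod]
      exact hm
end
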